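/- arXiv:1706.09267 — 2 statements merged into one kernel-verified Lean document; each statement's English description precedes it below -/
import Mathlib

section
/- Let G be a finite simple graph and uv an edge of G with u ≠ v. Then the number of Hamiltonian cycles of G equals the number of Hamiltonian cycles of G − uv (the graph with edge uv deleted) plus the number of Hamiltonian cycles of G / uv (the multigraph obtained by contracting uv) minus the number of Hamiltonian cycles of G − u minus the number of Hamiltonian cycles of G − v. -/
/-- A finite multigraph with loops: vertices and edges are labeled by
naturals, and `φ` assigns to each edge label its unordered pair of
endpoints. -/
structure MG where
  V : Finset ℕ
  E : Finset ℕ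
  φ : ℕ → Sym2 ℕ

namespace MG

noncomputable section
open scoped Classical
open Finset

/-- Well-formed: endpoints of edges lie in the vertex set. -/
def WF (G : MG) : Prop := ∀ e ∈ G.E, ∀ x ∈ G.φ e, x ∈ G.V

/-- Simple: no loops and no parallel edges, and well-formed. -/
def Simple (G : MG) : Prop :=
  G.WF ∧ (∀ e ∈ G.E, ¬ (G.φ e).IsDiag) ∧
    ∀ e ∈ G.E, ∀ e' ∈ G.E, G.φ e = G.φ e' → e = e'

/-- Degree of a vertex (loops count twice). -/
def deg (G : MG) (v : ℕ) : ℕ :=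
  ∑ e ∈ G.E, ((if v ∈ G.φ e then 1 else 0) + (if G.φ e = Sym2.diag v then 1 else 0))

/-- Adjacency by some edge. -/
def Adj (G : MG) (x y : ℕ) : Prop := ∃ e ∈ G.E, G.φ e = s(x, y)

/-- Reachability. -/
def Reach (G : MG) : ℕ → ℕ → Prop := Relation.ReflTransGen G.Adj

/-- The connected component of `v` (as a set of vertices). -/
def comp (G : MG) (v : ℕ) : Finset ℕ := G.V.filter (fun w => G.Reach v w)

/-- Number of connected components. -/
def k (G : MG) : ℕ := (G.V.image G.comp).card

/-- The subgraph determined by a pair (vertex set, edge set). -/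
def sub (G : MG) (p : Finset ℕ × Finset ℕ) : MG := ⟨p.1, p.2, G.φ⟩

/-- All subgraphs of `G`, encoded as (vertex set, edge set) pairs. -/
def subPairs (G : MG) : Finset (Finset ℕ × Finset ℕ) :=
  (G.V.powerset ×ˢ G.E.powerset).filter (fun p => ∀ e ∈ p.2, ∀ x ∈ G.φ e, x ∈ p.1)

/-- Edge deletion. -/
def delE (G : MG) (e : ℕ) : MG := ⟨G.V, G.E.erase e, G.φ⟩

/-- Vertex deletion (with all incident edges). -/
def delV (G : MG) (u : ℕ) : MG :=
  ⟨G.V.erase u, G.E.filter (fun e => u ∉ G.φ e), G.φ⟩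

/-- Contraction of the edge `e` with endpoints `u`, `v`: delete `e`,
merge `u` into `v`. -/
def contract (G : MG) (e u v : ℕ) : MG :=
  ⟨G.V.erase u, G.E.erase e,
    fun e' => Sym2.map (fun x => if x = u then v else x) (G.φ e')⟩

/-- Disjoint union (sensible when the vertex and edge label sets are disjoint). -/
def disjUnion (G H : MG) : MG :=
  ⟨G.V ∪ H.V, G.E ∪ H.E, fun e => if e ∈ G.E then G.φ e else H.φ e⟩

/-- One vertex with `n` loops. -/
def K1 (n : ℕ) : MG := ⟨{0}, Finset.range n, fun _ => Sym2.diag 0⟩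

/-- The empty graph. -/
def emp : MG := ⟨∅, ∅, fun _ => Sym2.diag 0⟩

/-- Number of Hamiltonian cycles: connected spanning subgraphs with all
degrees 2. -/
def h (G : MG) : ℕ :=
  ((G.subPairs).filter (fun p =>
    p.1 = G.V ∧ (G.sub p).k = 1 ∧ ∀ v ∈ p.1, (G.sub p).deg v = 2)).card

/-- Number of 2-factors with exactly `k₀` components. -/
def hk (G : MG) (k₀ : ℕ) : ℕ :=
  ((G.subPairs).filter (fun p =>
    p.1 = G.V ∧ (G.sub p).k = k₀ ∧ ∀ v ∈ p.1, (G.sub p).deg v = 2)).card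

/-- Number of subgraphs with `k₀` components and `l` edges in which every
vertex has degree 2. -/
def ckl (G : MG) (k₀ l : ℕ) : ℕ :=
  ((G.subPairs).filter (fun p =>
    (G.sub p).k = k₀ ∧ p.2.card = l ∧ ∀ v ∈ p.1, (G.sub p).deg v = 2)).card

/-- Number of `j`-matchings: subgraphs with `2j` vertices, all of degree 1. -/
def m (G : MG) (j : ℕ) : ℕ :=
  ((G.subPairs).filter (fun p =>
    p.1.card = 2 * j ∧ ∀ v ∈ p.1, (G.sub p).deg v = 1)).card

/-- Isomorphism of multigraphs. -/
def Iso (G H : MG) : Prop :=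
  ∃ f g : ℕ → ℕ, Set.BijOn f ↑G.V ↑H.V ∧ Set.BijOn g ↑G.E ↑H.E ∧
    ∀ e ∈ G.E, H.φ (g e) = Sym2.map f (G.φ e)

end
end MG

/-!
A Hamiltonian cycle of `G` either avoids `e`, and is then one of `G − e`, or passes through `e`.
A Hamiltonian cycle `F` of `G / e` has degree 2 at the merged vertex `v`; read back in `G`, these
two edge ends split as `d` at `u` and `2 - d` at `v`. If `d = 0`, `F` is a Hamiltonian cycle of
`G − u`. If `d = 2`, `F` avoids `v` in `G`, and `G / e` restricted to `F` is `G − v` restricted to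
`F` with `u` renamed to `v`. If `d = 1`, `F + e` is a Hamiltonian cycle of `G` through `e`, and every
such cycle arises so. Hence `h(G / e) = h(G − u) + #{cycles through e} + h(G − v)`, while
`h(G) = h(G − e) + #{cycles through e}`.
-/

namespace MG

open Finset
open scoped Classical

def ends (s : Sym2 ℕ) (w : ℕ) : ℕ :=
  (if w ∈ s then 1 else 0) + (if s = Sym2.diag w then 1 else 0)

theorem deg_eq_sum_ends (H : MG) (w : ℕ) : H.deg w = ∑ e ∈ H.E, ends (H.φ e) w := rfl

theorem ends_mk (a b w : ℕ) :
    ends s(a, b) w = (if a = w then 1 else 0) + (if b = w then 1 else 0) := by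
  unfold ends
  by_cases ha : a = w <;> by_cases hb : b = w <;> simp [ha, hb, Sym2.diag, eq_comm]

theorem ends_eq_zero_iff {s : Sym2 ℕ} {w : ℕ} : ends s w = 0 ↔ w ∉ s := by
  induction s using Sym2.ind with
  | _ a b =>
    rw [ends_mk, Sym2.mem_iff]
    split_ifs <;> grind

theorem ends_map_of_injOn {f : ℕ → ℕ} {S : Finset ℕ} (hf : Set.InjOn f S) {s : Sym2 ℕ}
    (hs : ∀ x ∈ s, x ∈ S) {w : ℕ} (hw : w ∈ S) : ends (s.map f) (f w) = ends s w := by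
  induction s using Sym2.ind with
  | _ a b =>
    simp only [Sym2.map_mk, ends_mk, hf.eq_iff (hs a (Sym2.mem_mk_left a b)) hw,
      hf.eq_iff (hs b (Sym2.mem_mk_right a b)) hw]

theorem ends_map_relabel_of_ne {u v w : ℕ} (hwu : w ≠ u) (hwv : w ≠ v) (s : Sym2 ℕ) :
    ends (s.map fun x => if x = u then v else x) w = ends s w := by
  induction s using Sym2.ind with
  | _ a b =>
    rw [Sym2.map_mk, ends_mk, ends_mk]
    split_ifs <;> omega

theorem ends_map_relabel_self {u v : ℕ} (huv : u ≠ v) (s : Sym2 ℕ) :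
    ends (s.map fun x => if x = u then v else x) v = ends s u + ends s v := by
  induction s using Sym2.ind with
  | _ a b =>
    rw [Sym2.map_mk, ends_mk, ends_mk, ends_mk]
    split_ifs <;> omega

theorem deg_eq_zero_iff {H : MG} {w : ℕ} : H.deg w = 0 ↔ ∀ e ∈ H.E, w ∉ H.φ e := by
  simp only [deg_eq_sum_ends, sum_eq_zero_iff, ends_eq_zero_iff]

theorem Adj.symm {H : MG} {x y : ℕ} : H.Adj x y → H.Adj y x
  | ⟨e, he, h⟩ => ⟨e, he, h.trans Sym2.eq_swap⟩

theorem Reach.symm {H : MG} {x y : ℕ} (h : H.Reach x y) : H.Reach y x :=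
  haveI : Std.Symm H.Adj := ⟨fun _ _ => Adj.symm⟩
  Std.Symm.symm (r := Relation.ReflTransGen H.Adj) _ _ h

theorem k_eq_one_iff {H : MG} :
    H.k = 1 ↔ H.V.Nonempty ∧ ∀ x ∈ H.V, ∀ y ∈ H.V, H.Reach x y := by
  have mem_comp : ∀ {x y}, y ∈ H.comp x ↔ y ∈ H.V ∧ H.Reach x y := mem_filter
  rw [k, card_eq_one]
  constructor
  · rintro ⟨A, hA⟩
    have hcomp : ∀ x ∈ H.V, H.comp x = A := fun x hx =>
      mem_singleton.mp (hA ▸ mem_image_of_mem _ hx)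
    refine ⟨image_nonempty.mp (hA ▸ singleton_nonempty A), fun x hx y hy => ?_⟩
    have hy' : y ∈ H.comp y := mem_comp.mpr ⟨hy, .refl⟩
    rw [hcomp y hy, ← hcomp x hx] at hy'
    exact (mem_comp.mp hy').2
  · rintro ⟨⟨x₀, hx₀⟩, hall⟩
    refine ⟨H.comp x₀, eq_singleton_iff_unique_mem.mpr ⟨mem_image_of_mem _ hx₀, ?_⟩⟩
    intro A hA
    obtain ⟨x, hx, rfl⟩ := mem_image.mp hA
    ext y
    simp only [mem_comp, and_congr_right_iff]
    exact fun _ => ⟨(hall x₀ hx₀ x hx).trans, (hall x hx x₀ hx₀).trans⟩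

def IsCycle (H : MG) : Prop := H.WF ∧ H.k = 1 ∧ ∀ w ∈ H.V, H.deg w = 2

def mapV (H : MG) (f : ℕ → ℕ) : MG := ⟨H.V.image f, H.E, fun e => (H.φ e).map f⟩

section mapV

variable {H : MG} {f : ℕ → ℕ}

theorem WF.mapV (hH : H.WF) (f : ℕ → ℕ) : (H.mapV f).WF := by
  intro e he x hx
  obtain ⟨a, ha, rfl⟩ := Sym2.mem_map.mp hx
  exact mem_image_of_mem f (hH e he a ha)

theorem deg_mapV (hH : H.WF) (hf : Set.InjOn f H.V) {w : ℕ} (hw : w ∈ H.V) :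
    (H.mapV f).deg (f w) = H.deg w :=
  sum_congr rfl fun e he => ends_map_of_injOn hf (hH e he) hw

theorem Reach.mapV {a b : ℕ} (h : H.Reach a b) : (H.mapV f).Reach (f a) (f b) :=
  Relation.ReflTransGen.lift f (fun _ _ ⟨e, he, hab⟩ => ⟨e, he, by simp [MG.mapV, hab]⟩) _ _ h

theorem Reach.of_mapV (hH : H.WF) (hf : Set.InjOn f H.V) {a b : ℕ} (ha : a ∈ H.V)
    (hb : b ∈ H.V) (h : (H.mapV f).Reach (f a) (f b)) : H.Reach a b := by
  generalize hy : f b = y at h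
  induction h generalizing b with
  | refl => exact hf hb ha hy ▸ .refl
  | tail _ hadj ih =>
    obtain ⟨e, he, hcd⟩ := hadj
    obtain ⟨p, q, hpq⟩ := Sym2.exists.mp ⟨H.φ e, rfl⟩
    have hp := hH e he p (hpq ▸ Sym2.mem_mk_left p q)
    have hq := hH e he q (hpq ▸ Sym2.mem_mk_right p q)
    change (H.φ e).map f = _ at hcd
    rw [hpq, Sym2.map_mk, Sym2.eq_iff] at hcd
    rcases hcd with ⟨hpc, hqd⟩ | ⟨hpd, hqc⟩
    · exact hf hq hb (hqd.trans hy.symm) ▸ (ih hp hpc).tail ⟨e, he, hpq⟩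
    · exact hf hp hb (hpd.trans hy.symm) ▸ (ih hq hqc).tail (Adj.symm ⟨e, he, hpq⟩)

theorem isCycle_mapV_iff (hH : H.WF) (hf : Set.InjOn f H.V) :
    (H.mapV f).IsCycle ↔ H.IsCycle := by
  have hconn : (∀ x ∈ H.V, ∀ y ∈ H.V, (H.mapV f).Reach (f x) (f y)) ↔
      ∀ x ∈ H.V, ∀ y ∈ H.V, H.Reach x y :=
    ⟨fun h x hx y hy => (h x hx y hy).of_mapV hH hf hx hy, fun h x hx y hy => (h x hx y hy).mapV⟩
  have hdeg : (∀ x ∈ H.V, (H.mapV f).deg (f x) = 2) ↔ ∀ x ∈ H.V, H.deg x = 2 :=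
    forall₂_congr fun x hx => by rw [deg_mapV hH hf hx]
  simp only [IsCycle, hH, hH.mapV, k_eq_one_iff, true_and]
  simpa only [MG.mapV, image_nonempty, forall_mem_image] using and_congr (and_congr .rfl hconn) hdeg

end mapV

section contract

variable {H : MG} {e u v : ℕ}

theorem reach_relabel (he : e ∈ H.E) (hφ : H.φ e = s(u, v)) (a : ℕ) :
    H.Reach a (if a = u then v else a) := by
  split_ifs with ha
  · exact .single ⟨e, he, ha ▸ hφ⟩
  · exact .refl

theorem Reach.contract (hφ : H.φ e = s(u, v)) {a b : ℕ} (h : H.Reach a b) :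
    (H.contract e u v).Reach (if a = u then v else a) (if b = u then v else b) := by
  refine Relation.ReflTransGen.lift' (p := (H.contract e u v).Adj) (fun a => if a = u then v else a)
    (fun x y ⟨e', he', hxy⟩ => ?_) _ _ h
  by_cases he'e : e' = e
  · rw [he'e, hφ, Sym2.eq_iff] at hxy
    rcases hxy with ⟨rfl, rfl⟩ | ⟨rfl, rfl⟩ <;>
      simpa only [Function.onFun, if_pos rfl, ite_self] using .refl
  · exact .single ⟨e', mem_erase.mpr ⟨he'e, he'⟩, by simp [MG.contract, hxy]⟩

theorem Reach.of_contract (he : e ∈ H.E) (hφ : H.φ e = s(u, v)) {x y : ℕ}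
    (h : (H.contract e u v).Reach x y) : H.Reach x y := by
  refine Relation.ReflTransGen.lift' id (fun x y ⟨e', he', hxy⟩ => ?_) _ _ h
  obtain ⟨a, b, hab⟩ := Sym2.exists.mp ⟨H.φ e', rfl⟩
  have hadj : H.Adj a b := ⟨e', mem_of_mem_erase he', hab⟩
  change (H.φ e').map _ = s(x, y) at hxy
  rw [hab, Sym2.map_mk, Sym2.eq_iff] at hxy
  rcases hxy with ⟨rfl, rfl⟩ | ⟨rfl, rfl⟩
  · exact (reach_relabel he hφ a).symm.trans (.head hadj (reach_relabel he hφ b))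
  · exact (reach_relabel he hφ b).symm.trans (.head hadj.symm (reach_relabel he hφ a))

theorem k_contract_eq_one_iff (he : e ∈ H.E) (hφ : H.φ e = s(u, v)) (hu : u ∈ H.V)
    (hv : v ∈ H.V) (huv : u ≠ v) : (H.contract e u v).k = 1 ↔ H.k = 1 := by
  have hv' : v ∈ H.V.erase u := mem_erase.mpr ⟨huv.symm, hv⟩
  rw [k_eq_one_iff, k_eq_one_iff]
  constructor
  · rintro ⟨-, hC⟩
    refine ⟨⟨u, hu⟩, fun a ha b hb => ?_⟩
    have hρ : ∀ c ∈ H.V, (if c = u then v else c) ∈ H.V.erase u := fun c hc => by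
      split_ifs with hcu
      exacts [hv', mem_erase.mpr ⟨hcu, hc⟩]
    exact (reach_relabel he hφ a).trans
      (((hC _ (hρ a ha) _ (hρ b hb)).of_contract he hφ).trans (reach_relabel he hφ b).symm)
  · rintro ⟨-, hH⟩
    refine ⟨⟨v, hv'⟩, fun x hx y hy => ?_⟩
    obtain ⟨hxu, hx⟩ := mem_erase.mp hx
    obtain ⟨hyu, hy⟩ := mem_erase.mp hy
    simpa [hxu, hyu] using (hH x hx y hy).contract hφ

theorem deg_contract_of_ne (he : e ∈ H.E) (hφ : H.φ e = s(u, v)) {w : ℕ} (hwu : w ≠ u)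
    (hwv : w ≠ v) : (H.contract e u v).deg w = H.deg w := by
  have hwe : ends (H.φ e) w = 0 := by
    rw [ends_eq_zero_iff, hφ, Sym2.mem_iff]
    exact not_or.mpr ⟨hwu, hwv⟩
  rw [deg_eq_sum_ends, deg_eq_sum_ends, ← sum_erase_add _ _ he, hwe, add_zero]
  exact sum_congr rfl fun e' _ => ends_map_relabel_of_ne hwu hwv _

theorem deg_contract_add_two (he : e ∈ H.E) (hφ : H.φ e = s(u, v)) (huv : u ≠ v) :
    (H.contract e u v).deg v + 2 = H.deg u + H.deg v := by
  rw [deg_eq_sum_ends, deg_eq_sum_ends, deg_eq_sum_ends, ← sum_add_distrib,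
    ← sum_erase_add _ _ he, hφ, ends_mk, ends_mk]
  simp only [huv, huv.symm, if_true, if_false]
  exact congrArg (· + 2) (sum_congr rfl fun e' _ => ends_map_relabel_self huv _)

theorem wf_contract_iff (hφ : H.φ e = s(u, v)) (hu : u ∈ H.V) (hv : v ∈ H.V)
    (huv : u ≠ v) : (H.contract e u v).WF ↔ H.WF := by
  constructor
  · intro hC e' he' a ha
    by_cases he'e : e' = e
    · rw [he'e, hφ, Sym2.mem_iff] at ha
      rcases ha with rfl | rfl
      exacts [hu, hv]
    · have := hC e' (mem_erase.mpr ⟨he'e, he'⟩) _ (Sym2.mem_map.mpr ⟨a, ha, rfl⟩)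
      split_ifs at this with hau
      exacts [hau ▸ hu, mem_of_mem_erase this]
  · intro hH e' he' x hx
    obtain ⟨a, ha, rfl⟩ := Sym2.mem_map.mp hx
    split_ifs with hau
    exacts [mem_erase.mpr ⟨huv.symm, hv⟩, mem_erase.mpr ⟨hau, hH e' (mem_of_mem_erase he') a ha⟩]

theorem isCycle_contract_iff (he : e ∈ H.E) (hφ : H.φ e = s(u, v)) (hu : u ∈ H.V)
    (hv : v ∈ H.V) (huv : u ≠ v) (hdu : H.deg u = 2) (hdv : H.deg v = 2) :
    (H.contract e u v).IsCycle ↔ H.IsCycle := by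
  have hdeg : (∀ w ∈ H.V.erase u, (H.contract e u v).deg w = 2) ↔ ∀ w ∈ H.V, H.deg w = 2 := by
    constructor
    · intro hC w hw
      by_cases hwu : w = u
      · exact hwu ▸ hdu
      by_cases hwv : w = v
      · exact hwv ▸ hdv
      rw [← deg_contract_of_ne he hφ hwu hwv]
      exact hC w (mem_erase.mpr ⟨hwu, hw⟩)
    · intro hH w hw
      obtain ⟨hwu, hw⟩ := mem_erase.mp hw
      by_cases hwv : w = v
      · subst hwv
        have := deg_contract_add_two he hφ huv
        omega
      · rw [deg_contract_of_ne he hφ hwu hwv]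
        exact hH w hw
  exact and_congr (wf_contract_iff hφ hu hv huv)
    (and_congr (k_contract_eq_one_iff he hφ hu hv huv) hdeg)

end contract

def spanning (H : MG) (F : Finset ℕ) : MG := ⟨H.V, F, H.φ⟩

noncomputable def hamEdgeSets (H : MG) : Finset (Finset ℕ) :=
  H.E.powerset.filter fun F => (H.spanning F).IsCycle

theorem mem_hamEdgeSets {H : MG} {F : Finset ℕ} :
    F ∈ H.hamEdgeSets ↔ F ⊆ H.E ∧ (H.spanning F).IsCycle := by
  rw [hamEdgeSets, mem_filter, mem_powerset]

theorem h_eq_card_hamEdgeSets (H : MG) : H.h = H.hamEdgeSets.card := by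
  refine card_nbij' Prod.snd (fun F => (H.V, F)) ?_ ?_ (fun p hp => ?_) fun _ _ => rfl
  · rintro ⟨P, F⟩ hp
    simp only [mem_coe, mem_filter, subPairs, mem_filter, mem_product, mem_powerset] at hp
    obtain ⟨⟨⟨-, hF⟩, hWF⟩, rfl, hk, hdeg⟩ := hp
    exact mem_hamEdgeSets.mpr ⟨hF, hWF, hk, hdeg⟩
  · intro F hF
    obtain ⟨hF, hWF, hk, hdeg⟩ := mem_hamEdgeSets.mp hF
    rw [mem_coe, mem_filter, subPairs, mem_filter, mem_product, mem_powerset, mem_powerset]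
    exact ⟨⟨⟨subset_rfl, hF⟩, hWF⟩, rfl, hk, hdeg⟩
  · simp only [mem_coe, mem_filter] at hp
    exact Prod.ext hp.2.1.symm rfl

theorem hamEdgeSets_delE (G : MG) (e : ℕ) :
    (G.delE e).hamEdgeSets = G.hamEdgeSets.filter (e ∉ ·) := by
  ext F
  simp only [mem_filter, mem_hamEdgeSets, delE, spanning, subset_erase, and_right_comm]

theorem WF.spanning {H : MG} (hH : H.WF) {F : Finset ℕ} (hF : F ⊆ H.E) : (H.spanning F).WF :=
  fun e he => hH e (hF he)

theorem WF.delV {G : MG} (hG : G.WF) (w : ℕ) : (G.delV w).WF := fun e he x hx =>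
  mem_erase.mpr ⟨fun hxw => (mem_filter.mp he).2 (hxw ▸ hx), hG e (mem_filter.mp he).1 x hx⟩

theorem subset_delV_E_iff {G : MG} {w : ℕ} {F : Finset ℕ} :
    F ⊆ (G.delV w).E ↔ F ⊆ G.E ∧ ∀ e ∈ F, w ∉ G.φ e := by
  simp only [delV, subset_iff, mem_filter]
  exact ⟨fun h => ⟨fun e he => (h he).1, fun e he => (h he).2⟩, fun h e he => ⟨h.1 he, h.2 e he⟩⟩

theorem relabel_injOn {u v : ℕ} {S : Finset ℕ} (h : u ∉ S ∨ v ∉ S) :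
    Set.InjOn (fun x => if x = u then v else x) S := by
  intro x hx y hy hxy
  simp only [mem_coe] at hx hy hxy
  split_ifs at hxy <;> grind

section deletionContraction

variable {G : MG} {e u v : ℕ} {F : Finset ℕ}

theorem contract_spanning_insert (heF : e ∉ F) :
    (G.spanning (insert e F)).contract e u v = (G.contract e u v).spanning F := by
  simp [spanning, MG.contract, erase_insert heF]

theorem contract_spanning_eq_mapV_delV_left :
    (G.contract e u v).spanning F =
      ((G.delV u).spanning F).mapV fun x => if x = u then v else x := by
  have hV : (G.V.erase u).image (fun x => if x = u then v else x) = G.V.erase u := by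
    conv_rhs => rw [← image_id' (s := G.V.erase u)]
    exact image_congr fun x hx => if_neg (mem_erase.mp hx).1
  simp only [spanning, MG.contract, delV, mapV, hV]

theorem contract_spanning_eq_mapV_delV_right (hu : u ∈ G.V) (hv : v ∈ G.V) (huv : u ≠ v) :
    (G.contract e u v).spanning F =
      ((G.delV v).spanning F).mapV fun x => if x = u then v else x := by
  have hV : (G.V.erase v).image (fun x => if x = u then v else x) = G.V.erase u := by
    ext x
    simp only [mem_image, mem_erase]
    constructor
    · rintro ⟨a, ⟨hav, ha⟩, rfl⟩
      split_ifs with hau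
      exacts [⟨huv.symm, hv⟩, ⟨hau, ha⟩]
    · rintro ⟨hxu, hx⟩
      by_cases hxv : x = v
      · exact ⟨u, ⟨huv, hu⟩, by rw [if_pos rfl, hxv]⟩
      · exact ⟨x, ⟨hxv, hx⟩, if_neg hxu⟩
  simp only [spanning, MG.contract, delV, mapV, hV]

theorem deg_spanning_insert (heF : e ∉ F) (hφ : G.φ e = s(u, v)) (huv : u ≠ v) :
    (G.spanning (insert e F)).deg u = (G.spanning F).deg u + 1 := by
  rw [deg_eq_sum_ends, deg_eq_sum_ends]
  change ∑ x ∈ insert e F, ends (G.φ x) u = ∑ x ∈ F, ends (G.φ x) u + 1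
  rw [sum_insert heF, hφ, ends_mk, if_pos rfl, if_neg huv.symm, add_comm]

theorem deg_contract_spanning (hφ : G.φ e = s(u, v)) (huv : u ≠ v) (heF : e ∉ F) :
    ((G.contract e u v).spanning F).deg v = (G.spanning F).deg u + (G.spanning F).deg v := by
  have := deg_contract_add_two (H := G.spanning (insert e F)) (mem_insert_self e F) hφ huv
  rw [contract_spanning_insert heF, deg_spanning_insert heF hφ huv,
    deg_spanning_insert heF (hφ.trans Sym2.eq_swap) huv.symm] at this
  omega

theorem deg_add_deg_of_mem_hamEdgeSets_contract (hφ : G.φ e = s(u, v)) (hv : v ∈ G.V)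
    (huv : u ≠ v) (hF : F ∈ (G.contract e u v).hamEdgeSets) :
    (G.spanning F).deg u + (G.spanning F).deg v = 2 := by
  obtain ⟨hFE, -, -, hdeg⟩ := mem_hamEdgeSets.mp hF
  rw [← deg_contract_spanning hφ huv fun h => (mem_erase.mp (hFE h)).1 rfl]
  exact hdeg v (mem_erase.mpr ⟨huv.symm, hv⟩)

theorem filter_hamEdgeSets_contract_deg_eq_zero (hG : G.WF) (hφ : G.φ e = s(u, v)) :
    (G.contract e u v).hamEdgeSets.filter (fun F => (G.spanning F).deg u = 0) =
      (G.delV u).hamEdgeSets := by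
  ext F
  have hcycle : ∀ hF : F ⊆ (G.delV u).E,
      ((G.contract e u v).spanning F).IsCycle ↔ ((G.delV u).spanning F).IsCycle := fun hF => by
    rw [contract_spanning_eq_mapV_delV_left]
    exact isCycle_mapV_iff ((hG.delV u).spanning hF) (relabel_injOn (.inl (notMem_erase u G.V)))
  simp only [mem_filter, mem_hamEdgeSets, deg_eq_zero_iff, subset_delV_E_iff]
  constructor
  · rintro ⟨⟨hFE, hC⟩, hFu⟩
    have hF : F ⊆ G.E ∧ ∀ e ∈ F, u ∉ G.φ e := ⟨hFE.trans (erase_subset e G.E), hFu⟩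
    exact ⟨hF, (hcycle (subset_delV_E_iff.mpr hF)).mp hC⟩
  · rintro ⟨⟨hFE, hFu⟩, hD⟩
    have heF : e ∉ F := fun he => hFu e he (hφ ▸ Sym2.mem_mk_left u v)
    exact ⟨⟨subset_erase.mpr ⟨hFE, heF⟩, (hcycle (subset_delV_E_iff.mpr ⟨hFE, hFu⟩)).mpr hD⟩, hFu⟩

theorem filter_hamEdgeSets_contract_deg_eq_two (hG : G.WF) (he : e ∈ G.E)
    (hφ : G.φ e = s(u, v)) (huv : u ≠ v) :
    (G.contract e u v).hamEdgeSets.filter (fun F => (G.spanning F).deg u = 2) =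
      (G.delV v).hamEdgeSets := by
  have hu : u ∈ G.V := hG e he u (hφ ▸ Sym2.mem_mk_left u v)
  have hv : v ∈ G.V := hG e he v (hφ ▸ Sym2.mem_mk_right u v)
  ext F
  have hcycle : ∀ hF : F ⊆ (G.delV v).E,
      ((G.contract e u v).spanning F).IsCycle ↔ ((G.delV v).spanning F).IsCycle := fun hF => by
    rw [contract_spanning_eq_mapV_delV_right hu hv huv]
    exact isCycle_mapV_iff ((hG.delV v).spanning hF) (relabel_injOn (.inr (notMem_erase v G.V)))
  rw [mem_filter]
  constructor
  · rintro ⟨hF, hdu⟩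
    have hsum := deg_add_deg_of_mem_hamEdgeSets_contract hφ hv huv hF
    obtain ⟨hFE, hC⟩ := mem_hamEdgeSets.mp hF
    have hdv : (G.spanning F).deg v = 0 := by omega
    have hFv : F ⊆ (G.delV v).E :=
      subset_delV_E_iff.mpr ⟨hFE.trans (erase_subset e G.E), deg_eq_zero_iff.mp hdv⟩
    exact mem_hamEdgeSets.mpr ⟨hFv, (hcycle hFv).mp hC⟩
  · intro hF
    obtain ⟨hFv, hD⟩ := mem_hamEdgeSets.mp hF
    obtain ⟨hFE, hFv'⟩ := subset_delV_E_iff.mp hFv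
    have heF : e ∉ F := fun he => hFv' e he (hφ ▸ Sym2.mem_mk_right u v)
    exact ⟨mem_hamEdgeSets.mpr ⟨subset_erase.mpr ⟨hFE, heF⟩, (hcycle hFv).mpr hD⟩,
      hD.2.2 u (mem_erase.mpr ⟨huv, hu⟩)⟩

theorem insert_mem_hamEdgeSets_iff (hG : G.WF) (he : e ∈ G.E) (hφ : G.φ e = s(u, v))
    (huv : u ≠ v) (heF : e ∉ F) :
    insert e F ∈ G.hamEdgeSets ↔
      F ∈ (G.contract e u v).hamEdgeSets ∧ (G.spanning F).deg u = 1 := by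
  have hu : u ∈ G.V := hG e he u (hφ ▸ Sym2.mem_mk_left u v)
  have hv : v ∈ G.V := hG e he v (hφ ▸ Sym2.mem_mk_right u v)
  have hdu := deg_spanning_insert (G := G) heF hφ huv
  have hdv := deg_spanning_insert (G := G) heF (hφ.trans Sym2.eq_swap) huv.symm
  have hcycle :=
    isCycle_contract_iff (H := G.spanning (insert e F)) (mem_insert_self e F) hφ hu hv huv
  rw [contract_spanning_insert heF] at hcycle
  rw [mem_hamEdgeSets, mem_hamEdgeSets, insert_subset_iff, MG.contract, subset_erase]
  constructor
  · rintro ⟨⟨-, hFE⟩, hK⟩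
    have hKu := hK.2.2 u hu
    have hKv := hK.2.2 v hv
    exact ⟨⟨⟨hFE, heF⟩, (hcycle hKu hKv).mpr hK⟩, by omega⟩
  · rintro ⟨⟨⟨hFE, -⟩, hC⟩, hFu⟩
    have hFv := deg_add_deg_of_mem_hamEdgeSets_contract hφ hv huv
      (mem_hamEdgeSets.mpr ⟨subset_erase.mpr ⟨hFE, heF⟩, hC⟩)
    exact ⟨⟨he, hFE⟩, (hcycle (by omega) (by omega)).mp hC⟩

theorem card_filter_hamEdgeSets_contract_deg_eq_one (hG : G.WF) (he : e ∈ G.E)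
    (hφ : G.φ e = s(u, v)) (huv : u ≠ v) :
    ((G.contract e u v).hamEdgeSets.filter (fun F => (G.spanning F).deg u = 1)).card =
      (G.hamEdgeSets.filter (e ∈ ·)).card := by
  have heF {F} (hF : F ∈ (G.contract e u v).hamEdgeSets) : e ∉ F := fun h =>
    (mem_erase.mp ((mem_hamEdgeSets.mp hF).1 h)).1 rfl
  refine card_nbij' (insert e) (·.erase e) (fun F hF => ?_) (fun F hF => ?_)
    (fun F hF => ?_) (fun F hF => ?_) <;> simp only [mem_coe, mem_filter] at hF ⊢
  · exact ⟨(insert_mem_hamEdgeSets_iff hG he hφ huv (heF hF.1)).mpr hF, mem_insert_self e F⟩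
  · rw [← insert_mem_hamEdgeSets_iff hG he hφ huv (notMem_erase e F), insert_erase hF.2]
    exact hF.1
  · exact erase_insert (heF hF.1)
  · exact insert_erase hF.2

theorem card_hamEdgeSets_contract (hG : G.WF) (he : e ∈ G.E) (hφ : G.φ e = s(u, v))
    (huv : u ≠ v) :
    (G.contract e u v).hamEdgeSets.card = (G.delV u).hamEdgeSets.card +
      (G.hamEdgeSets.filter (e ∈ ·)).card + (G.delV v).hamEdgeSets.card := by
  have hv : v ∈ G.V := hG e he v (hφ ▸ Sym2.mem_mk_right u v)
  have hfib : Set.MapsTo (fun F => (G.spanning F).deg u) (G.contract e u v).hamEdgeSets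
      (range 3) := fun F hF => by
    have := deg_add_deg_of_mem_hamEdgeSets_contract hφ hv huv hF
    simp only [coe_range, Set.mem_Iio]
    omega
  rw [card_eq_sum_card_fiberwise hfib, sum_range_succ, sum_range_succ, sum_range_one,
    filter_hamEdgeSets_contract_deg_eq_zero hG hφ,
    card_filter_hamEdgeSets_contract_deg_eq_one hG he hφ huv,
    filter_hamEdgeSets_contract_deg_eq_two hG he hφ huv]

end deletionContraction

end MG

open MG in
/-- Theorem 1(1): h(G) = h(G−uv) + h(G/uv) − h(G−u) − h(G−v) for a simple
graph `G` and an edge `e` with distinct endpoints `u ≠ v`. -/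
theorem hamiltonian_deletion_contraction (G : MG) (hG : G.Simple)
    (e u v : ℕ) (he : e ∈ G.E) (hφ : G.φ e = s(u, v)) (huv : u ≠ v) :
    (G.h : ℤ) = (G.delE e).h + (G.contract e u v).h - (G.delV u).h - (G.delV v).h := by
  have hsplit := Finset.card_filter_add_card_filter_not (s := G.hamEdgeSets) (e ∈ ·)
  rw [← hamEdgeSets_delE] at hsplit
  have hcontract := card_hamEdgeSets_contract hG.1 he hφ huv
  simp only [h_eq_card_hamEdgeSets]
  omega
end

section
/- Let G be a finite simple graph and uv an edge with u ≠ v. Let c_{k,l}(G) be the number of subgraphs H of G with k connected components and l edges such that every vertex of H has degree 2. Then c_{k,l}(G) = c_{k,l}(G − uv) + c_{k,l−1}(G / uv) − c_{k,l−1}(G − u) − c_{k,l−1}(G − v) + c_{k,l−1}(G − u − v). -/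
namespace MGAux

noncomputable section
open scoped Classical
open Finset MG

lemma sym2_cases (s : Sym2 ℕ) : ∃ a b, s = s(a, b) := by
  induction s using Sym2.ind with
  | _ a b => exact ⟨a, b, rfl⟩

lemma adj_symm {G : MG} {x y : ℕ} (h : G.Adj x y) : G.Adj y x := by
  obtain ⟨e, he, hφ⟩ := h
  exact ⟨e, he, by rw [hφ, Sym2.eq_swap]⟩

lemma reach_symm {G : MG} {x y : ℕ} (h : G.Reach x y) : G.Reach y x := by
  induction h with
  | refl => exact Relation.ReflTransGen.refl
  | tail _ h2 ih => exact Relation.ReflTransGen.head (adj_symm h2) ih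

lemma comp_eq_of_reach {G : MG} {a b : ℕ} (h : G.Reach a b) :
    G.comp a = G.comp b := by
  ext c
  simp only [MG.comp, mem_filter, and_congr_right_iff]
  exact fun _ => ⟨fun h2 => (reach_symm h).trans h2, fun h2 => h.trans h2⟩

lemma deg_eq_card {G : MG} (w : ℕ) (h : ∀ e' ∈ G.E, ¬ (G.φ e').IsDiag) :
    G.deg w = (G.E.filter (fun e' => w ∈ G.φ e')).card := by
  rw [MG.deg]
  rw [Finset.card_filter]
  apply Finset.sum_congr rfl
  intro e' he'
  have : G.φ e' ≠ Sym2.diag w := by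
    intro hd
    exact h e' he' (hd ▸ Sym2.diag_isDiag w)
  simp [this]

lemma mem_subPairs {G : MG} {p : Finset ℕ × Finset ℕ} :
    p ∈ G.subPairs ↔ p.1 ⊆ G.V ∧ p.2 ⊆ G.E ∧ ∀ e ∈ p.2, ∀ x ∈ G.φ e, x ∈ p.1 := by
  simp [MG.subPairs, Finset.mem_filter, Finset.mem_product, and_assoc]

end
end MGAux
namespace MGAux
noncomputable section
open scoped Classical
open Finset MG

section Relabel
variable {H H' : MG} {σ : ℕ → ℕ}
variable (hinj : Set.InjOn σ ↑H.V) (hWF : H.WF)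
variable (hV : H'.V = H.V.image σ) (hE : H'.E = H.E)
variable (hφ : ∀ e' ∈ H.E, H'.φ e' = Sym2.map σ (H.φ e'))

include hinj hWF hE hφ in
lemma relabel_deg : ∀ x ∈ H.V, H'.deg (σ x) = H.deg x := by
  intro x hx
  rw [MG.deg, MG.deg, hE]
  apply Finset.sum_congr rfl
  intro e' he'
  obtain ⟨a, b, hab⟩ := sym2_cases (H.φ e')
  have ha : a ∈ H.V := hWF e' he' a (by rw [hab]; exact Sym2.mem_mk_left a b)
  have hb : b ∈ H.V := hWF e' he' b (by rw [hab]; exact Sym2.mem_mk_right a b)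
  have h1 : H'.φ e' = s(σ a, σ b) := by rw [hφ e' he', hab, Sym2.map_pair_eq]
  have hmem : σ x ∈ H'.φ e' ↔ x ∈ H.φ e' := by
    rw [h1, hab, Sym2.mem_iff, Sym2.mem_iff]
    constructor
    · rintro (h | h)
      · exact Or.inl (hinj hx ha h)
      · exact Or.inr (hinj hx hb h)
    · rintro (h | h)
      · exact Or.inl (congrArg σ h)
      · exact Or.inr (congrArg σ h)
  have hdiag : H'.φ e' = Sym2.diag (σ x) ↔ H.φ e' = Sym2.diag x := by
    rw [h1, hab, Sym2.diag, Sym2.diag, Sym2.eq_iff, Sym2.eq_iff]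
    constructor
    · rintro (⟨h2, h3⟩ | ⟨h2, h3⟩) <;>
        exact Or.inl ⟨hinj ha hx h2, hinj hb hx h3⟩
    · rintro (⟨h2, h3⟩ | ⟨h2, h3⟩) <;>
        exact Or.inl ⟨congrArg σ h2, congrArg σ h3⟩
  simp only [hmem, hdiag]

include hE hφ in
lemma relabel_reach_fwd : ∀ x y, H.Reach x y → H'.Reach (σ x) (σ y) := by
  intro x y h
  induction h with
  | refl => exact Relation.ReflTransGen.refl
  | tail _ h2 ih =>
    obtain ⟨e', he', hee⟩ := h2
    exact ih.tail ⟨e', hE ▸ he', by rw [hφ e' he', hee, Sym2.map_pair_eq]⟩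

include hinj hWF hE hφ in
lemma relabel_reach_bwd : ∀ a ∈ H.V, ∀ m, H'.Reach (σ a) m →
    ∃ b ∈ H.V, σ b = m ∧ H.Reach a b := by
  intro a ha m h
  induction h with
  | refl => exact ⟨a, ha, rfl, Relation.ReflTransGen.refl⟩
  | tail _ h2 ih =>
    obtain ⟨b, hb, hσb, hab⟩ := ih
    obtain ⟨e', he', hee⟩ := h2
    rw [hE] at he'
    obtain ⟨x, y, hxy⟩ := sym2_cases (H.φ e')
    have hx : x ∈ H.V := hWF e' he' x (by rw [hxy]; exact Sym2.mem_mk_left x y)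
    have hy : y ∈ H.V := hWF e' he' y (by rw [hxy]; exact Sym2.mem_mk_right x y)
    rw [hφ e' he', hxy, Sym2.map_pair_eq] at hee
    rcases Sym2.eq_iff.1 hee with ⟨h3, h4⟩ | ⟨h3, h4⟩
    · have hxb : x = b := hinj hx hb (h3.trans hσb.symm)
      exact ⟨y, hy, h4, hab.tail ⟨e', he', hxb ▸ hxy⟩⟩
    · have hyb : y = b := hinj hy hb (h4.trans hσb.symm)
      refine ⟨x, hx, h3, hab.tail ⟨e', he', ?_⟩⟩
      rw [hxy, hyb, Sym2.eq_swap]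

include hinj hWF hV hE hφ in
lemma relabel_comp : ∀ a ∈ H.V, H'.comp (σ a) = (H.comp a).image σ := by
  intro a ha
  ext c
  simp only [MG.comp, mem_filter, Finset.mem_image, hV]
  constructor
  · rintro ⟨_, hr⟩
    obtain ⟨b, hb, hσb, hab⟩ := relabel_reach_bwd hinj hWF hE hφ a ha c hr
    exact ⟨b, ⟨hb, hab⟩, hσb⟩
  · rintro ⟨b, ⟨hb, hab⟩, hσb⟩
    refine ⟨⟨b, hb, hσb⟩, ?_⟩
    rw [← hσb]
    exact relabel_reach_fwd hE hφ a b hab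

include hinj hWF hV hE hφ in
lemma relabel_k : H'.k = H.k := by
  rw [MG.k, MG.k, hV, Finset.image_image]
  have h1 : H.V.image (H'.comp ∘ σ) = H.V.image (fun a => (H.comp a).image σ) :=
    Finset.image_congr (fun a ha => relabel_comp hinj hWF hV hE hφ a ha)
  rw [h1, show (fun a => (H.comp a).image σ) = ((fun C => C.image σ) ∘ H.comp) from rfl,
    ← Finset.image_image]
  apply Finset.card_image_of_injOn
  intro C hC D hD hCD
  simp only [Finset.coe_image, Set.mem_image] at hC hD
  obtain ⟨a, ha, rfl⟩ := hC
  obtain ⟨b, hb, rfl⟩ := hD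
  have hCD' : (H.comp a).image σ = (H.comp b).image σ := hCD
  have hsub : ∀ c, H.comp c ⊆ H.V := fun c => Finset.filter_subset _ _
  ext x
  constructor
  · intro hx
    have hh : σ x ∈ (H.comp b).image σ := hCD' ▸ Finset.mem_image_of_mem σ hx
    obtain ⟨y, hy, hxy⟩ := Finset.mem_image.1 hh
    exact hinj (hsub b hy) (hsub a hx) hxy ▸ hy
  · intro hx
    have hh : σ x ∈ (H.comp a).image σ := hCD'.symm ▸ Finset.mem_image_of_mem σ hx
    obtain ⟨y, hy, hxy⟩ := Finset.mem_image.1 hh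
    exact hinj (hsub a hy) (hsub b hx) hxy ▸ hy

end Relabel
end
end MGAux
namespace MGAux
noncomputable section
open scoped Classical
open Finset MG

section Contract
variable {u v : ℕ} (huv : u ≠ v)

/-- The vertex merging map. -/
def pi (u v : ℕ) : ℕ → ℕ := fun x => if x = u then v else x

include huv in
lemma pi_ne_u : ∀ x, pi u v x ≠ u := by
  intro x
  unfold pi
  split
  · exact huv.symm
  · assumption

lemma pi_of_ne {x : ℕ} (hx : x ≠ u) : pi u v x = x := if_neg hx

lemma pi_u : pi u v u = v := if_pos rfl

variable {H H' : MG} {e : ℕ}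
variable (hu : u ∈ H.V) (hv : v ∈ H.V) (he : e ∈ H.E) (hφe : H.φ e = s(u, v))
variable (hV : H'.V = H.V.erase u) (hE : H'.E = H.E.erase e)
variable (hφ : ∀ e', H'.φ e' = Sym2.map (pi u v) (H.φ e'))

include he hφe hE hφ in
lemma contract_reach_fwd : ∀ x y, H.Reach x y → H'.Reach (pi u v x) (pi u v y) := by
  intro x y h
  induction h with
  | refl => exact Relation.ReflTransGen.refl
  | tail _ h2 ih =>
    rename_i bm cm _
    obtain ⟨e', he', hee⟩ := h2
    by_cases hcase : e' = e
    · subst hcase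
      rw [hφe] at hee
      have hpi : pi u v bm = pi u v cm := by
        rcases Sym2.eq_iff.1 hee with ⟨h3, h4⟩ | ⟨h3, h4⟩ <;>
          rw [← h3, ← h4] <;> simp [pi]
      exact hpi ▸ ih
    · refine ih.tail ⟨e', hE ▸ Finset.mem_erase.2 ⟨hcase, he'⟩, ?_⟩
      rw [hφ e', hee, Sym2.map_pair_eq]

include huv he hφe hE hφ in
lemma contract_reach_bwd : ∀ a b, a ≠ u → H'.Reach a b → H.Reach a b := by
  have hAuv : H.Adj u v := ⟨e, he, hφe⟩
  intro a b ha h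
  induction h with
  | refl => exact Relation.ReflTransGen.refl
  | tail _ h2 ih =>
    obtain ⟨e', he', hee⟩ := h2
    rw [hE, Finset.mem_erase] at he'
    obtain ⟨hne, he'E⟩ := he'
    obtain ⟨x, y, hxy⟩ := sym2_cases (H.φ e')
    rw [hφ e', hxy, Sym2.map_pair_eq] at hee
    have hAxy : H.Adj x y := ⟨e', he'E, hxy⟩
    have key : ∀ c d : ℕ, pi u v x = c → pi u v y = d → H.Reach c d := by
      intro c d hc hd
      by_cases hxu : x = u
      · have hc' : c = v := by rw [← hc, hxu, pi_u]
        have hAuy : H.Adj u y := hxu ▸ hAxy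
        by_cases hyu : y = u
        · have hd' : d = v := by rw [← hd, hyu, pi_u]
          rw [hc', hd']
          exact Relation.ReflTransGen.refl
        · have hd' : d = y := by rw [← hd, pi_of_ne hyu]
          rw [hc', hd']
          exact (Relation.ReflTransGen.single (adj_symm hAuv)).tail hAuy
      · have hc' : c = x := by rw [← hc, pi_of_ne hxu]
        by_cases hyu : y = u
        · have hd' : d = v := by rw [← hd, hyu, pi_u]
          have hAxu : H.Adj x u := hyu ▸ hAxy
          rw [hc', hd']
          exact (Relation.ReflTransGen.single hAxu).tail hAuv
        · have hd' : d = y := by rw [← hd, pi_of_ne hyu]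
          rw [hc', hd']
          exact Relation.ReflTransGen.single hAxy
    rcases Sym2.eq_iff.1 hee with ⟨h3, h4⟩ | ⟨h3, h4⟩
    · exact ih.trans (key _ _ h3 h4)
    · exact ih.trans (reach_symm (key _ _ h3 h4))

include huv he hφe hE hφ in
lemma contract_reach_iff : ∀ a b, a ≠ u → b ≠ u → (H'.Reach a b ↔ H.Reach a b) := by
  intro a b ha hb
  constructor
  · exact contract_reach_bwd huv he hφe hE hφ a b ha
  · intro h
    have := contract_reach_fwd he hφe hE hφ a b h
    rwa [pi_of_ne ha, pi_of_ne hb] at this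

include huv he hφe hV hE hφ in
lemma contract_comp : ∀ a, a ≠ u → H'.comp a = (H.comp a).erase u := by
  intro a ha
  ext c
  simp only [MG.comp, mem_filter, Finset.mem_erase, hV]
  constructor
  · rintro ⟨⟨hcu, hcV⟩, hr⟩
    exact ⟨hcu, ⟨hcV, (contract_reach_iff huv he hφe hE hφ a c ha hcu).1 hr⟩⟩
  · rintro ⟨hcu, hcV, hr⟩
    exact ⟨⟨hcu, hcV⟩, (contract_reach_iff huv he hφe hE hφ a c ha hcu).2 hr⟩

include huv hu hv he hφe hV hE hφ in
lemma contract_k : H'.k = H.k := by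
  have hUV : H.Reach u v := Relation.ReflTransGen.single ⟨e, he, hφe⟩
  have hcompuv : H.comp u = H.comp v := comp_eq_of_reach hUV
  rw [MG.k, MG.k, hV]
  have h1 : (H.V.erase u).image H'.comp
      = (H.V.erase u).image (fun a => (H.comp a).erase u) :=
    Finset.image_congr (fun a ha =>
      contract_comp huv he hφe hV hE hφ a (Finset.mem_erase.1 ha).1)
  rw [h1]
  have h2 : (H.V.erase u).image (fun a => (H.comp a).erase u)
      = (H.V.image H.comp).image (fun C => C.erase u) := by
    ext C
    simp only [Finset.mem_image]
    constructor
    · rintro ⟨a, ha, rfl⟩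
      exact ⟨H.comp a, ⟨a, (Finset.mem_erase.1 ha).2, rfl⟩, rfl⟩
    · rintro ⟨D, ⟨a, ha, rfl⟩, rfl⟩
      by_cases hau : a = u
      · subst hau
        exact ⟨v, Finset.mem_erase.2 ⟨huv.symm, hv⟩, by rw [hcompuv]⟩
      · exact ⟨a, Finset.mem_erase.2 ⟨hau, ha⟩, rfl⟩
  rw [h2]
  apply Finset.card_image_of_injOn
  intro C hC D hD hCD
  simp only [Finset.coe_image, Set.mem_image] at hC hD
  obtain ⟨a, ha, rfl⟩ := hC
  obtain ⟨b, hb, rfl⟩ := hD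
  have hCD' : (H.comp a).erase u = (H.comp b).erase u := hCD
  -- u ∈ comp a ↔ u ∈ comp b
  have key : ∀ x y : ℕ, x ∈ H.V → y ∈ H.V →
      (H.comp x).erase u = (H.comp y).erase u → u ∈ H.comp x → u ∈ H.comp y := by
    intro x y hx hy hxy hux
    have hrxu : H.Reach x u := (Finset.mem_filter.1 hux).2
    have hrxv : H.Reach x v := hrxu.trans hUV
    have hvx : v ∈ H.comp x := Finset.mem_filter.2 ⟨hv, hrxv⟩
    have hvy : v ∈ (H.comp y).erase u := by
      rw [← hxy]; exact Finset.mem_erase.2 ⟨huv.symm, hvx⟩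
    have hry : H.Reach y v := (Finset.mem_filter.1 (Finset.mem_erase.1 hvy).2).2
    exact Finset.mem_filter.2 ⟨hu, hry.trans (reach_symm hUV)⟩
  ext x
  by_cases hxu : x = u
  · subst hxu
    exact ⟨key a b ha hb hCD', key b a hb ha hCD'.symm⟩
  · constructor
    · intro hx
      have : x ∈ (H.comp b).erase u := hCD' ▸ Finset.mem_erase.2 ⟨hxu, hx⟩
      exact (Finset.mem_erase.1 this).2
    · intro hx
      have : x ∈ (H.comp a).erase u := hCD'.symm ▸ Finset.mem_erase.2 ⟨hxu, hx⟩
      exact (Finset.mem_erase.1 this).2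

end Contract
end
end MGAux
namespace MGAux
noncomputable section
open scoped Classical
open Finset MG

variable {u v : ℕ}

lemma mem_map_pi_of_ne {w : ℕ} (hwu : w ≠ u) (hwv : w ≠ v) (s : Sym2 ℕ) :
    w ∈ s.map (pi u v) ↔ w ∈ s := by
  obtain ⟨a, b, rfl⟩ := sym2_cases s
  rw [Sym2.map_pair_eq, Sym2.mem_iff, Sym2.mem_iff]
  constructor
  · rintro (h | h)
    · left
      by_cases hau : a = u
      · exact absurd (h.trans (hau ▸ pi_u)) hwv
      · exact h.trans (pi_of_ne hau)
    · right
      by_cases hbu : b = u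
      · exact absurd (h.trans (hbu ▸ pi_u)) hwv
      · exact h.trans (pi_of_ne hbu)
  · rintro (rfl | rfl)
    · exact Or.inl (pi_of_ne hwu).symm
    · exact Or.inr (pi_of_ne hwu).symm

lemma v_mem_map_pi (s : Sym2 ℕ) : v ∈ s.map (pi u v) ↔ u ∈ s ∨ v ∈ s := by
  obtain ⟨a, b, rfl⟩ := sym2_cases s
  rw [Sym2.map_pair_eq, Sym2.mem_iff, Sym2.mem_iff, Sym2.mem_iff]
  constructor
  · rintro (h | h)
    · by_cases hau : a = u
      · exact Or.inl (Or.inl hau.symm)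
      · rw [pi_of_ne hau] at h
        exact Or.inr (Or.inl h)
    · by_cases hbu : b = u
      · exact Or.inl (Or.inr hbu.symm)
      · rw [pi_of_ne hbu] at h
        exact Or.inr (Or.inr h)
  · rintro ((h | h) | (h | h))
    · exact Or.inl (by rw [← h, pi_u])
    · exact Or.inr (by rw [← h, pi_u])
    · by_cases hau : a = u
      · exact Or.inl (by rw [hau, pi_u])
      · exact Or.inl (by rw [pi_of_ne hau, ← h])
    · by_cases hbu : b = u
      · exact Or.inr (by rw [hbu, pi_u])
      · exact Or.inr (by rw [pi_of_ne hbu, ← h])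

lemma map_pi_not_isDiag (huv : u ≠ v) {s : Sym2 ℕ} (h1 : ¬ s.IsDiag)
    (h2 : s ≠ s(u, v)) : ¬ (s.map (pi u v)).IsDiag := by
  obtain ⟨a, b, rfl⟩ := sym2_cases s
  rw [Sym2.map_pair_eq, Sym2.mk_isDiag_iff]
  rw [Sym2.mk_isDiag_iff] at h1
  intro hab
  unfold pi at hab
  split at hab <;> split at hab
  · subst_vars; exact h1 rfl
  · subst_vars; exact h2 rfl
  · subst_vars; exact h2 (by rw [Sym2.eq_swap])
  · exact h1 hab

end
end MGAux
namespace MGAux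
noncomputable section
open scoped Classical
open Finset MG

lemma map_pi_eq_self {u v : ℕ} {s : Sym2 ℕ} (h : u ∉ s) :
    Sym2.map (pi u v) s = s := by
  obtain ⟨a, b, rfl⟩ := sym2_cases s
  rw [Sym2.mem_iff] at h
  push_neg at h
  rw [Sym2.map_pair_eq, pi_of_ne (fun hh => h.1 hh.symm),
    pi_of_ne (fun hh => h.2 hh.symm)]

lemma eq_on_k {H H' : MG} (hV : H'.V = H.V) (hE : H'.E = H.E) (hWF : H.WF)
    (hφ : ∀ e' ∈ H.E, H'.φ e' = H.φ e') :
    H'.k = H.k ∧ ∀ x ∈ H.V, H'.deg x = H.deg x := by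
  have hinj : Set.InjOn (id : ℕ → ℕ) ↑H.V := Set.injOn_id _
  have hV' : H'.V = H.V.image id := by rw [Finset.image_id, hV]
  have hφ' : ∀ e' ∈ H.E, H'.φ e' = Sym2.map id (H.φ e') := by
    intro e' he'
    rw [Sym2.map_id, id_eq, hφ e' he']
  exact ⟨relabel_k hinj hWF hV' hE hφ',
    fun x hx => relabel_deg hinj hWF hE hφ' x hx⟩

end
end MGAux
namespace MGAux
noncomputable section
open scoped Classical
open Finset MG

lemma rho_pi {u v x : ℕ} (huv : u ≠ v) (hx : x ≠ v) : pi v u (pi u v x) = x := by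
  unfold pi
  by_cases hxu : x = u
  · simp [hxu]
  · simp [hxu, hx]

lemma map_rho_map_pi {u v : ℕ} (huv : u ≠ v) {s : Sym2 ℕ} (hv : v ∉ s) :
    Sym2.map (pi v u) (Sym2.map (pi u v) s) = s := by
  obtain ⟨a, b, rfl⟩ := sym2_cases s
  rw [Sym2.mem_iff] at hv
  push_neg at hv
  rw [Sym2.map_pair_eq, Sym2.map_pair_eq, rho_pi huv (fun h => hv.1 h.symm),
    rho_pi huv (fun h => hv.2 h.symm)]

lemma injOn_pi {u v : ℕ} {s : Finset ℕ} (huv : u ≠ v) (hv : v ∉ s) :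
    Set.InjOn (pi u v) ↑s := by
  intro x hx y hy hxy
  have hxv : x ≠ v := fun h => hv (h ▸ hx)
  have hyv : y ≠ v := fun h => hv (h ▸ hy)
  have := congrArg (pi v u) hxy
  rwa [rho_pi huv hxv, rho_pi huv hyv] at this

end
end MGAux
namespace MGAux
noncomputable section
open scoped Classical
open Finset MG

/-- The filtered set counted by `ckl`. -/
def cklSet (H : MG) (k l : ℕ) : Finset (Finset ℕ × Finset ℕ) :=
  H.subPairs.filter (fun p =>
    (H.sub p).k = k ∧ p.2.card = l ∧ ∀ v ∈ p.1, (H.sub p).deg v = 2)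

lemma ckl_eq_card (H : MG) (k l : ℕ) : H.ckl k l = (cklSet H k l).card := by
  rw [MG.ckl, cklSet]

lemma mem_cklSet {H : MG} {k l : ℕ} {p : Finset ℕ × Finset ℕ} :
    p ∈ cklSet H k l ↔ p ∈ H.subPairs ∧
      (H.sub p).k = k ∧ p.2.card = l ∧ ∀ v ∈ p.1, (H.sub p).deg v = 2 := by
  rw [cklSet, Finset.mem_filter]

end
end MGAux

open MG MGAux Finset in
open scoped Classical in
/-- Lemma 2(1): c_{k,l}(G) = c_{k,l}(G−uv) + c_{k,l−1}(G/uv)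
− c_{k,l−1}(G−u) − c_{k,l−1}(G−v) + c_{k,l−1}(G−u−v). -/
theorem cycleCount_deletion_contraction (G : MG) (hG : G.Simple)
    (e u v : ℕ) (he : e ∈ G.E) (hφ : G.φ e = s(u, v)) (huv : u ≠ v)
    (k l : ℕ) (hl : 1 ≤ l) :
    (G.ckl k l : ℤ) = (G.delE e).ckl k l + (G.contract e u v).ckl k (l - 1)
      - (G.delV u).ckl k (l - 1) - (G.delV v).ckl k (l - 1)
      + ((G.delV u).delV v).ckl k (l - 1) := by
  obtain ⟨hWF, hnd, hpinj⟩ := hG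
  set S := cklSet G k l with hS
  set C := cklSet (G.contract e u v) k (l - 1) with hC
  set nu : Finset ℕ × Finset ℕ → ℕ := fun q => (q.2.filter (fun e' => u ∈ G.φ e')).card with hnu
  set nv : Finset ℕ × Finset ℕ → ℕ := fun q => (q.2.filter (fun e' => v ∈ G.φ e')).card with hnv
  have hone : ∀ e' ∈ G.E, e' ≠ e → G.φ e' ≠ s(u, v) := by
    intro e' h1 h2 h3
    exact h2 (hpinj e' h1 e he (by rw [h3, hφ]))
  have huV : u ∈ G.V := hWF e he u (by rw [hφ]; exact Sym2.mem_mk_left u v)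
  have hvV : v ∈ G.V := hWF e he v (by rw [hφ]; exact Sym2.mem_mk_right u v)
  have hsubC : ∀ q : Finset ℕ × Finset ℕ, (G.contract e u v).sub q
      = MG.mk q.1 q.2 (fun e' => Sym2.map (pi u v) (G.φ e')) := fun _ => rfl
  have hCV : (G.contract e u v).V = G.V.erase u := rfl
  have hCE : (G.contract e u v).E = G.E.erase e := rfl
  have hCφ : ∀ e', (G.contract e u v).φ e' = Sym2.map (pi u v) (G.φ e') := fun _ => rfl
  have hCφ' : (G.contract e u v).φ = fun e' => Sym2.map (pi u v) (G.φ e') := rfl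
  -- deletion part
  have h0 : cklSet (G.delE e) k l = S.filter (fun p => e ∉ p.2) := by
    ext p
    simp only [hS, mem_cklSet, Finset.mem_filter, mem_subPairs, MG.delE, MG.sub,
      Finset.subset_erase]
    tauto
  have h1 : S.card = (S.filter (fun p => e ∉ p.2)).card
      + (S.filter (fun p => e ∈ p.2)).card := by
    have := Finset.card_filter_add_card_filter_not (s := S) (p := fun p => e ∈ p.2)
    omega
  -- contraction part
  have hdisj : ∀ Q : Finset ℕ, Q ⊆ G.E.erase e →
      Disjoint (Q.filter (fun e' => u ∈ G.φ e')) (Q.filter (fun e' => v ∈ G.φ e')) := by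
    intro Q hQ
    rw [Finset.disjoint_left]
    intro e₁ hm1 hm2
    obtain ⟨hm1a, hm1b⟩ := Finset.mem_filter.1 hm1
    obtain ⟨_, hm2b⟩ := Finset.mem_filter.1 hm2
    have he1 := Finset.mem_erase.1 (hQ hm1a)
    exact hone e₁ he1.2 he1.1 ((Sym2.mem_and_mem_iff huv).1 ⟨hm1b, hm2b⟩)
  have hdegvQ : ∀ Q : Finset ℕ, Q ⊆ G.E.erase e →
      (Q.filter (fun e' => v ∈ Sym2.map (pi u v) (G.φ e'))).card
        = (Q.filter (fun e' => u ∈ G.φ e')).card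
          + (Q.filter (fun e' => v ∈ G.φ e')).card := by
    intro Q hQ
    have hcong : Q.filter (fun e' => v ∈ Sym2.map (pi u v) (G.φ e'))
        = Q.filter (fun e' => u ∈ G.φ e' ∨ v ∈ G.φ e') :=
      Finset.filter_congr (fun e' _ => v_mem_map_pi (G.φ e'))
    rw [hcong, Finset.filter_or, Finset.card_union_of_disjoint (hdisj Q hQ)]
  have hndC : ∀ Q : Finset ℕ, Q ⊆ G.E.erase e →
      ∀ e' ∈ Q, ¬ (Sym2.map (pi u v) (G.φ e')).IsDiag := by
    intro Q hQ e' h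
    have h' := Finset.mem_erase.1 (hQ h)
    exact map_pi_not_isDiag huv (hnd e' h'.2) (hone e' h'.2 h'.1)
  have h2 : (S.filter (fun p => e ∈ p.2)).card
      = (C.filter (fun q => 1 ≤ nu q ∧ 1 ≤ nv q)).card := by
    refine Finset.card_bij' (fun p _ => ((p.1.erase u, p.2.erase e) : Finset ℕ × Finset ℕ))
      (fun q _ => ((insert u q.1, insert e q.2) : Finset ℕ × Finset ℕ)) ?_ ?_ ?_ ?_
    · -- forward map lands in the target
      intro p hp
      simp only [hS, Finset.mem_filter, mem_cklSet, mem_subPairs, MG.sub] at hp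
      obtain ⟨⟨⟨h1, h2, h3'⟩, hk, hcard, hdeg⟩, he2⟩ := hp
      have hu1 : u ∈ p.1 := h3' e he2 u (by rw [hφ]; exact Sym2.mem_mk_left u v)
      have hv1 : v ∈ p.1 := h3' e he2 v (by rw [hφ]; exact Sym2.mem_mk_right u v)
      have hQE : p.2.erase e ⊆ G.E.erase e := Finset.erase_subset_erase e h2
      -- the degree of u and v in p is 2, counted as edge filters
      have hdegu : (p.2.filter (fun e' => u ∈ G.φ e')).card = 2 := by
        rw [← deg_eq_card (G := MG.mk p.1 p.2 G.φ) u (fun e' h => hnd e' (h2 h))]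
        exact hdeg u hu1
      have hdegv' : (p.2.filter (fun e' => v ∈ G.φ e')).card = 2 := by
        rw [← deg_eq_card (G := MG.mk p.1 p.2 G.φ) v (fun e' h => hnd e' (h2 h))]
        exact hdeg v hv1
      have hnu1 : ((p.2.erase e).filter (fun e' => u ∈ G.φ e')).card = 1 := by
        rw [Finset.filter_erase, Finset.card_erase_of_mem
          (Finset.mem_filter.2 ⟨he2, by rw [hφ]; exact Sym2.mem_mk_left u v⟩), hdegu]
      have hnv1 : ((p.2.erase e).filter (fun e' => v ∈ G.φ e')).card = 1 := by
        rw [Finset.filter_erase, Finset.card_erase_of_mem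
          (Finset.mem_filter.2 ⟨he2, by rw [hφ]; exact Sym2.mem_mk_right u v⟩), hdegv']
      have hkc := contract_k (H := MG.mk p.1 p.2 G.φ)
        (H' := MG.mk (p.1.erase u) (p.2.erase e) (fun e' => Sym2.map (pi u v) (G.φ e')))
        huv hu1 hv1 he2 hφ rfl rfl (fun _ => rfl)
      simp only [hC, hnu, hnv, Finset.mem_filter, mem_cklSet, mem_subPairs, hsubC, hCV,
        hCE, hCφ, hCφ']
      refine ⟨⟨⟨Finset.erase_subset_erase u h1, hQE, ?_⟩, ?_, ?_, ?_⟩, ?_, ?_⟩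
      · -- endpoints
        intro e' he' x hx
        obtain ⟨a, ha, rfl⟩ := Sym2.mem_map.1 hx
        refine Finset.mem_erase.2 ⟨pi_ne_u huv a, ?_⟩
        by_cases hau : a = u
        · rw [hau, pi_u]; exact hv1
        · rw [pi_of_ne hau]
          exact h3' e' (Finset.mem_of_mem_erase he') a ha
      · rw [hkc]; exact hk
      · rw [Finset.card_erase_of_mem he2, hcard]
      · -- degrees in the contracted subgraph
        intro w hw
        obtain ⟨hwu, hw1⟩ := Finset.mem_erase.1 hw
        rw [deg_eq_card (G := MG.mk (p.1.erase u) (p.2.erase e)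
          (fun e' => Sym2.map (pi u v) (G.φ e'))) w (hndC _ hQE)]
        by_cases hwv : w = v
        · subst hwv
          rw [hdegvQ _ hQE, hnu1, hnv1]
        · have hcong : (p.2.erase e).filter (fun e' => w ∈ Sym2.map (pi u v) (G.φ e'))
              = (p.2.erase e).filter (fun e' => w ∈ G.φ e') :=
            Finset.filter_congr (fun e' _ => mem_map_pi_of_ne hwu hwv (G.φ e'))
          rw [hcong, Finset.filter_erase, Finset.erase_eq_of_notMem, ← deg_eq_card
            (G := MG.mk p.1 p.2 G.φ) w (fun e' h => hnd e' (h2 h))]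
          · exact hdeg w hw1
          · intro hmem
            have := (Finset.mem_filter.1 hmem).2
            rw [hφ, Sym2.mem_iff] at this
            rcases this with h' | h'
            · exact hwu h'
            · exact hwv h'
      · rw [hnu1]
      · rw [hnv1]
    · -- backward map lands in the source
      intro q hq
      simp only [hC, hnu, hnv, Finset.mem_filter, mem_cklSet, mem_subPairs, hsubC, hCV,
        hCE, hCφ, hCφ'] at hq
      obtain ⟨⟨⟨h1, h2, h3'⟩, hk, hcard, hdeg⟩, hnu1, hnv1⟩ := hq
      have hup : u ∉ q.1 := fun h => (Finset.mem_erase.1 (h1 h)).1 rfl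
      have hen : e ∉ q.2 := fun h => (Finset.mem_erase.1 (h2 h)).1 rfl
      have h2E : q.2 ⊆ G.E := fun e' h => Finset.mem_of_mem_erase (h2 h)
      -- v is a vertex of q
      have hv1 : v ∈ q.1 := by
        obtain ⟨e₁, he₁⟩ := Finset.card_pos.1 hnu1
        obtain ⟨he₁q, he₁u⟩ := Finset.mem_filter.1 he₁
        exact h3' e₁ he₁q v (Sym2.mem_map.2 ⟨u, he₁u, pi_u⟩)
      -- the merged vertex has degree nu + nv = 2, so nu = nv = 1
      have hdegv2 : (q.2.filter (fun e' => u ∈ G.φ e')).card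
          + (q.2.filter (fun e' => v ∈ G.φ e')).card = 2 := by
        rw [← hdegvQ _ h2, ← deg_eq_card (G := MG.mk q.1 q.2
          (fun e' => Sym2.map (pi u v) (G.φ e'))) v (hndC _ h2)]
        exact hdeg v hv1
      have hnu' : (q.2.filter (fun e' => u ∈ G.φ e')).card = 1 := by omega
      have hnv' : (q.2.filter (fun e' => v ∈ G.φ e')).card = 1 := by omega
      have hkc := contract_k (H := MG.mk (insert u q.1) (insert e q.2) G.φ)
        (H' := MG.mk q.1 q.2 (fun e' => Sym2.map (pi u v) (G.φ e')))
        huv (Finset.mem_insert_self u q.1) (Finset.mem_insert_of_mem hv1)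
        (Finset.mem_insert_self e q.2) hφ (by rw [Finset.erase_insert hup])
        (by rw [Finset.erase_insert hen]) (fun _ => rfl)
      simp only [hS, Finset.mem_filter, mem_cklSet, mem_subPairs, MG.sub]
      refine ⟨⟨⟨?_, ?_, ?_⟩, ?_, ?_, ?_⟩, Finset.mem_insert_self e q.2⟩
      · -- vertices
        refine Finset.insert_subset huV ?_
        exact fun x hx => Finset.mem_of_mem_erase (h1 hx)
      · -- edges
        refine Finset.insert_subset he h2E
      · -- endpoints
        intro e' he' x hx
        rcases Finset.mem_insert.1 he' with he'e | he'q
        · rw [he'e, hφ, Sym2.mem_iff] at hx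
          rcases hx with hx' | hx'
          · exact hx' ▸ Finset.mem_insert_self u q.1
          · exact hx' ▸ Finset.mem_insert_of_mem hv1
        · by_cases hxu : x = u
          · exact hxu ▸ Finset.mem_insert_self u q.1
          · refine Finset.mem_insert_of_mem ?_
            have hm : pi u v x ∈ Sym2.map (pi u v) (G.φ e') := Sym2.mem_map.2 ⟨x, hx, rfl⟩
            have := h3' e' he'q _ hm
            rwa [pi_of_ne hxu] at this
      · rw [← hkc]; exact hk
      · rw [Finset.card_insert_of_notMem hen, hcard]
        omega
      · -- degrees
        intro w hw
        have hIE : insert e q.2 ⊆ G.E := Finset.insert_subset he h2E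
        rw [deg_eq_card (G := MG.mk (insert u q.1) (insert e q.2) G.φ) w
          (fun e' h => hnd e' (hIE h)), Finset.filter_insert]
        rcases Finset.mem_insert.1 hw with hwu' | hwq
        · rw [if_pos (by rw [hwu', hφ]; exact Sym2.mem_mk_left u v),
            Finset.card_insert_of_notMem (fun h => hen (Finset.mem_filter.1 h).1)]
          have hc : q.2.filter (fun e' => w ∈ G.φ e')
              = q.2.filter (fun e' => u ∈ G.φ e') := by rw [hwu']
          rw [hc, hnu']
        · by_cases hwv : w = v
          · rw [if_pos (by rw [hwv, hφ]; exact Sym2.mem_mk_right u v),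
              Finset.card_insert_of_notMem (fun h => hen (Finset.mem_filter.1 h).1)]
            have hc : q.2.filter (fun e' => w ∈ G.φ e')
                = q.2.filter (fun e' => v ∈ G.φ e') := by rw [hwv]
            rw [hc, hnv']
          · have hwu : w ≠ u := fun h => hup (h ▸ hwq)
            have hwnot : w ∉ G.φ e := by
              rw [hφ, Sym2.mem_iff]
              rintro (h' | h')
              · exact hwu h'
              · exact hwv h'
            rw [if_neg hwnot]
            have hcong : q.2.filter (fun e' => w ∈ G.φ e')
                = q.2.filter (fun e' => w ∈ Sym2.map (pi u v) (G.φ e')) :=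
              Finset.filter_congr (fun e' _ => (mem_map_pi_of_ne hwu hwv (G.φ e')).symm)
            rw [hcong, ← deg_eq_card (G := MG.mk q.1 q.2
              (fun e' => Sym2.map (pi u v) (G.φ e'))) w (hndC _ h2)]
            exact hdeg w hwq
    · -- left inverse
      intro p hp
      simp only [hS, Finset.mem_filter, mem_cklSet, mem_subPairs, MG.sub] at hp
      obtain ⟨⟨⟨h1, h2, h3'⟩, _, _, _⟩, he2⟩ := hp
      have hu1 : u ∈ p.1 := h3' e he2 u (by rw [hφ]; exact Sym2.mem_mk_left u v)
      exact Prod.ext (Finset.insert_erase hu1) (Finset.insert_erase he2)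
    · -- right inverse
      intro q hq
      simp only [hC, hnu, hnv, Finset.mem_filter, mem_cklSet, mem_subPairs, hsubC, hCV,
        hCE, hCφ, hCφ'] at hq
      have hup : u ∉ q.1 := fun h => (Finset.mem_erase.1 (hq.1.1.1 h)).1 rfl
      have hen : e ∉ q.2 := fun h => (Finset.mem_erase.1 (hq.1.1.2.1 h)).1 rfl
      exact Prod.ext (Finset.erase_insert hup) (Finset.erase_insert hen)
  have h3 : cklSet (G.delV u) k (l - 1) = C.filter (fun q => nu q = 0) := by
    ext q
    simp only [hC, hnu, mem_cklSet, Finset.mem_filter, mem_subPairs, hsubC, hCV, hCE, hCφ, hCφ',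
      MG.delV, MG.sub]
    constructor
    · rintro ⟨⟨h1, h2, h3'⟩, hk, hcard, hdeg⟩
      have hu0 : ∀ e' ∈ q.2, u ∉ G.φ e' := fun e' h => (Finset.mem_filter.1 (h2 h)).2
      have h2E : q.2 ⊆ G.E := fun e' h => (Finset.mem_filter.1 (h2 h)).1
      have hen : e ∉ q.2 := fun hmem => hu0 e hmem (by rw [hφ]; exact Sym2.mem_mk_left u v)
      have hφeq : ∀ e' ∈ q.2, Sym2.map (pi u v) (G.φ e') = G.φ e' :=
        fun e' h => map_pi_eq_self (hu0 e' h)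
      have hkd := eq_on_k (H := MG.mk q.1 q.2 G.φ)
        (H' := MG.mk q.1 q.2 (fun e' => Sym2.map (pi u v) (G.φ e'))) rfl rfl h3' hφeq
      refine ⟨⟨⟨h1, Finset.subset_erase.2 ⟨h2E, hen⟩, ?_⟩, ?_, hcard, ?_⟩, ?_⟩
      · intro e' he' x hx
        rw [hφeq e' he'] at hx
        exact h3' e' he' x hx
      · rw [hkd.1]; exact hk
      · intro w hw
        rw [hkd.2 w hw]; exact hdeg w hw
      · exact Finset.card_eq_zero.2 (Finset.filter_eq_empty_iff.2 hu0)
    · rintro ⟨⟨⟨h1, h2, h3'⟩, hk, hcard, hdeg⟩, hnu0⟩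
      have hu0 : ∀ e' ∈ q.2, u ∉ G.φ e' := by
        intro e' h hmem
        have hm : e' ∈ q.2.filter (fun e' => u ∈ G.φ e') := Finset.mem_filter.2 ⟨h, hmem⟩
        rw [Finset.card_eq_zero.1 hnu0] at hm
        exact Finset.notMem_empty e' hm
      have h2E : q.2 ⊆ G.E := fun e' h => Finset.mem_of_mem_erase (h2 h)
      have hφeq : ∀ e' ∈ q.2, Sym2.map (pi u v) (G.φ e') = G.φ e' :=
        fun e' h => map_pi_eq_self (hu0 e' h)
      have hWF' : (MG.mk q.1 q.2 (fun e' => Sym2.map (pi u v) (G.φ e'))).WF := h3'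
      have hkd := eq_on_k (H := MG.mk q.1 q.2 (fun e' => Sym2.map (pi u v) (G.φ e')))
        (H' := MG.mk q.1 q.2 G.φ) rfl rfl hWF' (fun e' h => (hφeq e' h).symm)
      refine ⟨⟨h1, fun e' h => Finset.mem_filter.2 ⟨h2E h, hu0 e' h⟩, ?_⟩, ?_, hcard, ?_⟩
      · intro e' he' x hx
        rw [← hφeq e' he'] at hx
        exact h3' e' he' x hx
      · rw [hkd.1]; exact hk
      · intro w hw
        rw [hkd.2 w hw]; exact hdeg w hw
  have h4 : (cklSet (G.delV v) k (l - 1)).card = (C.filter (fun q => nv q = 0)).card := by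
    refine Finset.card_bij' (fun p _ => ((p.1.image (pi u v), p.2) : Finset ℕ × Finset ℕ))
      (fun q _ => ((q.1.image (pi v u), q.2) : Finset ℕ × Finset ℕ)) ?_ ?_ ?_ ?_
    · intro p hp
      simp only [mem_cklSet, mem_subPairs, MG.delV, MG.sub] at hp
      obtain ⟨⟨h1, h2, h3'⟩, hk, hcard, hdeg⟩ := hp
      have hv0 : ∀ e' ∈ p.2, v ∉ G.φ e' := fun e' h => (Finset.mem_filter.1 (h2 h)).2
      have h2E : p.2 ⊆ G.E := fun e' h => (Finset.mem_filter.1 (h2 h)).1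
      have hen : e ∉ p.2 := fun hmem => hv0 e hmem (by rw [hφ]; exact Sym2.mem_mk_right u v)
      have hvp : v ∉ p.1 := fun h => (Finset.mem_erase.1 (h1 h)).1 rfl
      have hinj : Set.InjOn (pi u v) ↑p.1 := injOn_pi huv hvp
      have hkd := relabel_k (H := MG.mk p.1 p.2 G.φ)
        (H' := MG.mk (p.1.image (pi u v)) p.2 (fun e' => Sym2.map (pi u v) (G.φ e')))
        hinj h3' rfl rfl (fun e' _ => rfl)
      have hdegr := fun (x : ℕ) (hx : x ∈ p.1) => relabel_deg (H := MG.mk p.1 p.2 G.φ)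
        (H' := MG.mk (p.1.image (pi u v)) p.2 (fun e' => Sym2.map (pi u v) (G.φ e')))
        hinj h3' rfl (fun e' _ => rfl) x hx
      simp only [hC, hnv, Finset.mem_filter, mem_cklSet, mem_subPairs, hsubC, hCV, hCE,
        hCφ, hCφ']
      refine ⟨⟨⟨?_, Finset.subset_erase.2 ⟨h2E, hen⟩, ?_⟩, ?_, hcard, ?_⟩, ?_⟩
      · intro x hx
        obtain ⟨y, hy, rfl⟩ := Finset.mem_image.1 hx
        refine Finset.mem_erase.2 ⟨pi_ne_u huv y, ?_⟩
        by_cases hyu : y = u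
        · rw [hyu, pi_u]; exact hvV
        · rw [pi_of_ne hyu]; exact Finset.mem_of_mem_erase (h1 hy)
      · intro e' he' x hx
        obtain ⟨a, ha, rfl⟩ := Sym2.mem_map.1 hx
        exact Finset.mem_image_of_mem _ (h3' e' he' a ha)
      · rw [hkd]; exact hk
      · intro w hw
        obtain ⟨y, hy, rfl⟩ := Finset.mem_image.1 hw
        rw [hdegr y hy]; exact hdeg y hy
      · exact Finset.card_eq_zero.2 (Finset.filter_eq_empty_iff.2 hv0)
    · intro q hq
      simp only [hC, hnv, Finset.mem_filter, mem_cklSet, mem_subPairs, hsubC, hCV, hCE,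
        hCφ, hCφ'] at hq
      obtain ⟨⟨⟨h1, h2, h3'⟩, hk, hcard, hdeg⟩, hnv0⟩ := hq
      have hv0 : ∀ e' ∈ q.2, v ∉ G.φ e' := by
        intro e' h hmem
        have hm : e' ∈ q.2.filter (fun e' => v ∈ G.φ e') := Finset.mem_filter.2 ⟨h, hmem⟩
        rw [Finset.card_eq_zero.1 hnv0] at hm
        exact Finset.notMem_empty e' hm
      have h2E : q.2 ⊆ G.E := fun e' h => Finset.mem_of_mem_erase (h2 h)
      have hup : u ∉ q.1 := fun h => (Finset.mem_erase.1 (h1 h)).1 rfl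
      have hρinj : Set.InjOn (pi v u) ↑q.1 := injOn_pi huv.symm hup
      have hφr : ∀ e' ∈ q.2, G.φ e' = Sym2.map (pi v u) (Sym2.map (pi u v) (G.φ e')) :=
        fun e' h => (map_rho_map_pi huv (hv0 e' h)).symm
      have hkd := relabel_k (H := MG.mk q.1 q.2 (fun e' => Sym2.map (pi u v) (G.φ e')))
        (H' := MG.mk (q.1.image (pi v u)) q.2 G.φ) hρinj h3' rfl rfl hφr
      have hdegr := fun (x : ℕ) (hx : x ∈ q.1) =>
        relabel_deg (H := MG.mk q.1 q.2 (fun e' => Sym2.map (pi u v) (G.φ e')))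
        (H' := MG.mk (q.1.image (pi v u)) q.2 G.φ) hρinj h3' rfl hφr x hx
      simp only [mem_cklSet, mem_subPairs, MG.delV, MG.sub]
      refine ⟨⟨?_, fun e' h => Finset.mem_filter.2 ⟨h2E h, hv0 e' h⟩, ?_⟩, ?_, hcard, ?_⟩
      · intro x hx
        obtain ⟨y, hy, rfl⟩ := Finset.mem_image.1 hx
        refine Finset.mem_erase.2 ⟨pi_ne_u huv.symm y, ?_⟩
        by_cases hyv : y = v
        · rw [hyv, pi_u]; exact huV
        · rw [pi_of_ne hyv]; exact Finset.mem_of_mem_erase (h1 hy)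
      · intro e' he' x hx
        have hxv : x ≠ v := fun h => hv0 e' he' (h ▸ hx)
        have hm : pi u v x ∈ Sym2.map (pi u v) (G.φ e') := Sym2.mem_map.2 ⟨x, hx, rfl⟩
        have hq1 : pi u v x ∈ q.1 := h3' e' he' _ hm
        have him : pi v u (pi u v x) ∈ q.1.image (pi v u) := Finset.mem_image_of_mem _ hq1
        rwa [rho_pi huv hxv] at him
      · rw [hkd]; exact hk
      · intro w hw
        obtain ⟨y, hy, rfl⟩ := Finset.mem_image.1 hw
        rw [hdegr y hy]; exact hdeg y hy
    · intro p hp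
      simp only [mem_cklSet, mem_subPairs, MG.delV, MG.sub] at hp
      have hvp : v ∉ p.1 := fun h => (Finset.mem_erase.1 (hp.1.1 h)).1 rfl
      have him : (p.1.image (pi u v)).image (pi v u) = p.1 := by
        have heq : Set.EqOn (pi v u ∘ pi u v) id ↑p.1 :=
          fun x hx => rho_pi huv (fun h => hvp (h ▸ hx))
        rw [Finset.image_image, Finset.image_congr heq, Finset.image_id]
      exact Prod.ext him rfl
    · intro q hq
      simp only [hC, hnv, Finset.mem_filter, mem_cklSet, mem_subPairs, hsubC, hCV, hCE,
        hCφ, hCφ'] at hq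
      have hup : u ∉ q.1 := fun h => (Finset.mem_erase.1 (hq.1.1.1 h)).1 rfl
      have him : (q.1.image (pi v u)).image (pi u v) = q.1 := by
        have heq : Set.EqOn (pi u v ∘ pi v u) id ↑q.1 :=
          fun x hx => rho_pi huv.symm (fun h => hup (h ▸ hx))
        rw [Finset.image_image, Finset.image_congr heq, Finset.image_id]
      exact Prod.ext him rfl
  have h5 : cklSet ((G.delV u).delV v) k (l - 1)
      = C.filter (fun q => nu q = 0 ∧ nv q = 0) := by
    ext q
    simp only [hC, hnu, hnv, mem_cklSet, Finset.mem_filter, mem_subPairs, hsubC, hCV, hCE, hCφ, hCφ',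
      MG.delV, MG.sub]
    constructor
    · rintro ⟨⟨h1, h2, h3'⟩, hk, hcard, hdeg⟩
      have hu0 : ∀ e' ∈ q.2, u ∉ G.φ e' :=
        fun e' h => (Finset.mem_filter.1 (Finset.mem_filter.1 (h2 h)).1).2
      have hv0 : ∀ e' ∈ q.2, v ∉ G.φ e' := fun e' h => (Finset.mem_filter.1 (h2 h)).2
      have h2E : q.2 ⊆ G.E :=
        fun e' h => (Finset.mem_filter.1 (Finset.mem_filter.1 (h2 h)).1).1
      have hen : e ∉ q.2 := fun hmem => hu0 e hmem (by rw [hφ]; exact Sym2.mem_mk_left u v)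
      have hφeq : ∀ e' ∈ q.2, Sym2.map (pi u v) (G.φ e') = G.φ e' :=
        fun e' h => map_pi_eq_self (hu0 e' h)
      have hkd := eq_on_k (H := MG.mk q.1 q.2 G.φ)
        (H' := MG.mk q.1 q.2 (fun e' => Sym2.map (pi u v) (G.φ e'))) rfl rfl h3' hφeq
      refine ⟨⟨⟨fun x hx => Finset.mem_of_mem_erase (h1 hx),
        Finset.subset_erase.2 ⟨h2E, hen⟩, ?_⟩, ?_, hcard, ?_⟩, ?_, ?_⟩
      · intro e' he' x hx
        rw [hφeq e' he'] at hx
        exact h3' e' he' x hx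
      · rw [hkd.1]; exact hk
      · intro w hw
        rw [hkd.2 w hw]; exact hdeg w hw
      · exact Finset.card_eq_zero.2 (Finset.filter_eq_empty_iff.2 hu0)
      · exact Finset.card_eq_zero.2 (Finset.filter_eq_empty_iff.2 hv0)
    · rintro ⟨⟨⟨h1, h2, h3'⟩, hk, hcard, hdeg⟩, hnu0, hnv0⟩
      have hu0 : ∀ e' ∈ q.2, u ∉ G.φ e' := by
        intro e' h hmem
        have hm : e' ∈ q.2.filter (fun e' => u ∈ G.φ e') := Finset.mem_filter.2 ⟨h, hmem⟩
        rw [Finset.card_eq_zero.1 hnu0] at hm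
        exact Finset.notMem_empty e' hm
      have hv0 : ∀ e' ∈ q.2, v ∉ G.φ e' := by
        intro e' h hmem
        have hm : e' ∈ q.2.filter (fun e' => v ∈ G.φ e') := Finset.mem_filter.2 ⟨h, hmem⟩
        rw [Finset.card_eq_zero.1 hnv0] at hm
        exact Finset.notMem_empty e' hm
      have h2E : q.2 ⊆ G.E := fun e' h => Finset.mem_of_mem_erase (h2 h)
      have hφeq : ∀ e' ∈ q.2, Sym2.map (pi u v) (G.φ e') = G.φ e' :=
        fun e' h => map_pi_eq_self (hu0 e' h)
      have hWF' : (MG.mk q.1 q.2 (fun e' => Sym2.map (pi u v) (G.φ e'))).WF := h3'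
      have hkd := eq_on_k (H := MG.mk q.1 q.2 (fun e' => Sym2.map (pi u v) (G.φ e')))
        (H' := MG.mk q.1 q.2 G.φ) rfl rfl hWF' (fun e' h => (hφeq e' h).symm)
      -- v is not a vertex, else its degree would be 0 rather than 2
      have hvnot : v ∉ q.1 := by
        intro hv1
        have hdv := hdeg v hv1
        have hnd' : ∀ e' ∈ q.2, ¬ (Sym2.map (pi u v) (G.φ e')).IsDiag := by
          intro e' h
          exact map_pi_not_isDiag huv (hnd e' (h2E h))
            (hone e' (h2E h) (Finset.mem_erase.1 (h2 h)).1)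
        rw [deg_eq_card (G := MG.mk q.1 q.2 (fun e' => Sym2.map (pi u v) (G.φ e'))) v hnd']
          at hdv
        have hem : q.2.filter (fun e' => v ∈ Sym2.map (pi u v) (G.φ e')) = ∅ := by
          refine Finset.filter_eq_empty_iff.2 ?_
          intro e' h hmem
          rcases (v_mem_map_pi _).1 hmem with h' | h'
          · exact hu0 e' h h'
          · exact hv0 e' h h'
        rw [hem] at hdv
        simp at hdv
      refine ⟨⟨Finset.subset_erase.2 ⟨h1, hvnot⟩,
        fun e' h => Finset.mem_filter.2 ⟨Finset.mem_filter.2 ⟨h2E h, hu0 e' h⟩, hv0 e' h⟩,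
        ?_⟩, ?_, hcard, ?_⟩
      · intro e' he' x hx
        rw [← hφeq e' he'] at hx
        exact h3' e' he' x hx
      · rw [hkd.1]; exact hk
      · intro w hw
        rw [hkd.2 w hw]; exact hdeg w hw
  have h6 : C.card + (C.filter (fun q => nu q = 0 ∧ nv q = 0)).card
      = (C.filter (fun q => 1 ≤ nu q ∧ 1 ≤ nv q)).card
        + (C.filter (fun q => nu q = 0)).card + (C.filter (fun q => nv q = 0)).card := by
    have hsplit : (C.filter (fun q => 1 ≤ nu q ∧ 1 ≤ nv q)).card
        + (C.filter (fun q => ¬(1 ≤ nu q ∧ 1 ≤ nv q))).card = C.card :=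
      Finset.card_filter_add_card_filter_not _
    have hcong : C.filter (fun q => ¬(1 ≤ nu q ∧ 1 ≤ nv q))
        = C.filter (fun q => nu q = 0 ∨ nv q = 0) := by
      apply Finset.filter_congr
      intro q _
      constructor
      · intro h
        omega
      · intro h
        omega
    have hor : C.filter (fun q => nu q = 0 ∨ nv q = 0)
        = C.filter (fun q => nu q = 0) ∪ C.filter (fun q => nv q = 0) :=
      Finset.filter_or _ _ _
    have hand : C.filter (fun q => nu q = 0 ∧ nv q = 0)
        = C.filter (fun q => nu q = 0) ∩ C.filter (fun q => nv q = 0) :=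
      Finset.filter_and _ _ _
    have hui := Finset.card_union_add_card_inter
      (C.filter (fun q => nu q = 0)) (C.filter (fun q => nv q = 0))
    rw [hcong, hor] at hsplit
    rw [hand]
    omega
  rw [ckl_eq_card, ckl_eq_card, ckl_eq_card, ckl_eq_card, ckl_eq_card, ckl_eq_card,
    ← hS, ← hC, h0, h3, h4, h5]
  push_cast
  rw [h1, h2]
  push_cast
  omega
end
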